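/- arXiv:2603.00930 — 2 statements merged into one kernel-verified Lean document; each statement's English description precedes it below -/
import Mathlib

section
/- Let $\kappa \in \mathbb{N}$, $\varepsilon \in (0,1)$, $\gamma \in (0,\varepsilon)$, $m \ge 2$, and suppose $\sigma \le (\varepsilon - \gamma)\kappa \log_2 m$. Let $P_c$ be any quantity satisfying $P_c \le \Pr[E < e_0] + m^{r+1-e_0}$ where $E \sim \mathrm{Bin}(\kappa,\varepsilon)$, $r = \lfloor \sigma/\log_2 m \rfloor$, and $e_0 = \lfloor r + 1 + \gamma\kappa/2 \rfloor$. Then $P_c \le e^{-\gamma^2 \kappa / 2} + m^{1 - \gamma\kappa/2}$. -/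
open Finset Real

/-!
The sum in `hPc` is `Pr[E < e₀]` for `E ~ Bin(κ, ε)`. Since `r ≤ (ε - γ)κ`, every `e < e₀` satisfies
`e ≤ κ(ε - γ/2)`, and the lower tail of the binomial law is bounded by Chernoff's inequality:
with Hoeffding's lemma for one Bernoulli trial, `E[e^{tE}] ≤ e^{κ(εt + t²/8)}`, and the choice
`t = -2γ` gives `Pr[E ≤ κ(ε - γ/2)] ≤ e^{-γ²κ/2}`. For the second term, `e₀ > r + γκ/2` and `m ≥ 1`.
-/

namespace ProbabilityTheory

open MeasureTheory

lemma one_sub_add_mul_exp_le_exp (p : unitInterval) (t : ℝ) :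
    1 - p + p * exp t ≤ exp (p * t + t ^ 2 / 8) := by
  have h01 : ∀ᵐ x ∂Ber((1 : ℝ), 0, p), x ∈ Set.Icc (0 : ℝ) 1 :=
    bernoulliMeasure_apply_of_notMem_of_notMem p measurableSet_Icc.compl (by simp) (by simp)
  have hoeffding := (hasSubgaussianMGF_of_mem_Icc aemeasurable_id h01).mgf_le t
  simp only [mgf, integral_bernoulliMeasure, id] at hoeffding
  norm_num at hoeffding
  calc 1 - p + p * exp t
      = exp (p * t) * (p * exp (t * (1 - p)) + (1 - p) * exp (-(t * p))) := by
        rw [mul_add, mul_left_comm, ← exp_add, mul_left_comm (exp _), ← exp_add]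
        ring_nf
        rw [exp_zero]
        ring
    _ ≤ exp (p * t) * exp (t ^ 2 / 8) := by gcongr; exact hoeffding.trans_eq (by congr 1; ring)
    _ = exp (p * t + t ^ 2 / 8) := (exp_add _ _).symm

lemma mgf_binomial (n : ℕ) (p : unitInterval) (t : ℝ) :
    mgf (fun k : ℕ ↦ (k : ℝ)) Bin(n, p) t = (1 - p + p * exp t) ^ n := by
  rw [mgf, integral_binomial, ← Nat.range_succ_eq_Iic, add_comm (1 - (p : ℝ)), add_pow]
  refine sum_congr rfl fun k _ ↦ ?_
  rw [smul_eq_mul, mul_pow, ← exp_nat_mul, mul_comm (k : ℝ) t]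
  ring

lemma binomial_real_le_le_exp (n : ℕ) (p : unitInterval) {δ : ℝ} (hδ : 0 ≤ δ) :
    Bin(n, p).real {k | (k : ℝ) ≤ n * (p - δ)} ≤ exp (-2 * δ ^ 2 * n) :=
  -- Chernoff's bound at the parameter `-4δ` that minimises the resulting exponent
  calc Bin(n, p).real {k | (k : ℝ) ≤ n * (p - δ)}
      ≤ exp (-(-(4 * δ)) * (n * (p - δ))) * mgf (fun k : ℕ ↦ (k : ℝ)) Bin(n, p) (-(4 * δ)) :=
        measure_le_le_exp_mul_mgf _ (by linarith) (integrable_binomial _)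
    _ ≤ exp (4 * δ * (n * (p - δ))) * exp (n * (p * (-(4 * δ)) + (-(4 * δ)) ^ 2 / 8)) := by
        rw [mgf_binomial, exp_nat_mul, neg_neg]
        gcongr
        · exact add_nonneg (sub_nonneg.2 p.2.2) (mul_nonneg p.2.1 (exp_pos _).le)
        · exact one_sub_add_mul_exp_le_exp p _
    _ = exp (-2 * δ ^ 2 * n) := by
        rw [← exp_add]
        ring_nf

lemma binomial_real_Iio (n : ℕ) (p : unitInterval) (k₀ : ℕ) :
    Bin(n, p).real (Set.Iio k₀) = ∑ k ∈ range (n + 1),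
      if k < k₀ then (n.choose k : ℝ) * p ^ k * (1 - p) ^ (n - k) else 0 := by
  rw [← integral_indicator_one measurableSet_Iio, integral_binomial, Nat.range_succ_eq_Iic]
  refine sum_congr rfl fun k _ ↦ ?_
  by_cases hk : k < k₀ <;> simp [hk]

end ProbabilityTheory

open MeasureTheory ProbabilityTheory in
theorem strong_converse_coded_general (κ : ℕ) (ε γ σ : ℝ) (m : ℕ)
    (hε : ε ∈ Set.Ioo (0:ℝ) 1) (hγ : γ ∈ Set.Ioo (0:ℝ) ε)
    (hm : 2 ≤ m)
    (hσ : σ ≤ (ε - γ) * κ * Real.logb 2 m)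
    (r : ℕ) (hr : r = Nat.floor (σ / Real.logb 2 m))
    (e₀ : ℕ) (he₀ : e₀ = Nat.floor ((r : ℝ) + 1 + γ * κ / 2))
    (Pc : ℝ)
    (hPc : Pc ≤ (∑ e ∈ Finset.range (κ + 1),
                  if e < e₀ then (κ.choose e : ℝ) * ε ^ e * (1 - ε) ^ (κ - e) else 0)
              + (m : ℝ) ^ ((r : ℝ) + 1 - (e₀ : ℝ))) :
    Pc ≤ Real.exp (-γ ^ 2 * κ / 2) + (m : ℝ) ^ ((1 : ℝ) - γ * κ / 2) := by
  obtain ⟨hε0, hε1⟩ := hε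
  obtain ⟨hγ0, hγε⟩ := hγ
  let p : unitInterval := ⟨ε, hε0.le, hε1.le⟩
  have hlogb : 0 < logb 2 m := logb_pos (by norm_num) (by exact_mod_cast hm)
  have hr_le : (r : ℝ) ≤ (ε - γ) * κ := by
    have : r ≤ ⌊(ε - γ) * κ⌋₊ := hr ▸ Nat.floor_le_floor ((div_le_iff₀ hlogb).2 hσ)
    exact (Nat.cast_le.2 this).trans (Nat.floor_le (mul_nonneg (by linarith) κ.cast_nonneg))
  have he₀_le : (e₀ : ℝ) ≤ r + 1 + γ * κ / 2 := he₀ ▸ Nat.floor_le (by positivity)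
  have he₀_gt : (r : ℝ) + γ * κ / 2 < e₀ := by
    have := he₀ ▸ Nat.lt_floor_add_one ((r : ℝ) + 1 + γ * κ / 2)
    linarith
  have h_tail : Set.Iio e₀ ⊆ {k : ℕ | (k : ℝ) ≤ κ * (p - γ / 2)} := fun k hk ↦ by
    have : (k : ℝ) + 1 ≤ e₀ := by exact_mod_cast Set.mem_Iio.1 hk
    simp only [Set.mem_ofPred_eq, p]
    linarith
  calc Pc ≤ Bin(κ, p).real (Set.Iio e₀) + (m : ℝ) ^ ((r : ℝ) + 1 - e₀) := by
        rwa [binomial_real_Iio]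
    _ ≤ exp (-2 * (γ / 2) ^ 2 * κ) + (m : ℝ) ^ ((1 : ℝ) - γ * κ / 2) := by
        refine add_le_add ?_ (rpow_le_rpow_of_exponent_le ?_ ?_)
        · exact (measureReal_mono h_tail).trans (binomial_real_le_le_exp κ p (by linarith))
        · exact_mod_cast Nat.one_le_of_lt hm
        · linarith
    _ = exp (-γ ^ 2 * κ / 2) + (m : ℝ) ^ ((1 : ℝ) - γ * κ / 2) := by ring_nf

/-- Strong converse for coded caching: if `σ ≤ (ε-γ)κ log₂ m` and
`P_c ≤ Pr[E < e₀] + m^{r+1-e₀}` with `E ~ Bin(κ,ε)`, `r = ⌊σ/log₂ m⌋`,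
`e₀ = ⌊r + 1 + γκ/2⌋`, then `P_c ≤ e^{-γ²κ/2} + m^{1-γκ/2}`. -/
theorem strong_converse_coded (κ : ℕ) (ε γ σ : ℝ) (m : ℕ)
    (hε : ε ∈ Set.Ioo (0:ℝ) 1) (hγ : γ ∈ Set.Ioo (0:ℝ) ε)
    (hm : 2 ≤ m) (hσ0 : 0 ≤ σ)
    (hσ : σ ≤ (ε - γ) * κ * Real.logb 2 m)
    (r : ℕ) (hr : r = Nat.floor (σ / Real.logb 2 m))
    (e₀ : ℕ) (he₀ : e₀ = Nat.floor ((r : ℝ) + 1 + γ * κ / 2))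
    (Pc : ℝ)
    (hPc : Pc ≤ (∑ e ∈ Finset.range (κ + 1),
                  if e < e₀ then (κ.choose e : ℝ) * ε ^ e * (1 - ε) ^ (κ - e) else 0)
              + (m : ℝ) ^ ((r : ℝ) + 1 - (e₀ : ℝ))) :
    Pc ≤ Real.exp (-γ ^ 2 * κ / 2) + (m : ℝ) ^ ((1 : ℝ) - γ * κ / 2) :=
  strong_converse_coded_general κ ε γ σ m hε hγ hm hσ r hr e₀ he₀ Pc hPc
end

section
/- Let $\varepsilon \in (0, 1/2]$ and define on $E \in (0, |\log_2(1-\varepsilon)|)$ the functions $\rho_{\mathrm{unc}}(E) = 1 - E/|\log_2(1-\varepsilon)|$ and $\rho_{\mathrm{code}}(E)$, the unique $\rho \in (\varepsilon, 1]$ with $D(\rho\|\varepsilon) = E$, where $D(p\|q) = p\log_2(p/q) + (1-p)\log_2((1-p)/(1-q))$. Then the ratio $h(E) = \rho_{\mathrm{unc}}(E)/\rho_{\mathrm{code}}(E)$ satisfies: (i) $h$ is strictly decreasing; (ii) $\lim_{E\to 0^+} h(E) = 1/\varepsilon$; (iii) $h(E) \to 0$ as $E \to |\log_2(1-\varepsilon)|$;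 (iv) there is a unique $E^*$ in the interval with $h(E^*) = 1$. -/
open Real Filter Set Topology

/-!
`ρ_code` is a right inverse of the strictly increasing map `p ↦ D(p‖ε)` on `[ε, 1]`, so it is
strictly increasing and tends to `ε` as `E → 0⁺`; dividing the positive, strictly decreasing
numerator `1 - E/L` by it gives (i)–(iii). A crossing `h(E) = 1` means `ρ_code(E) = 1 - E/L`, i.e.
`D(p‖ε) = L (1 - p)` for `p = 1 - E/L`. The difference of the two sides goes from `-L (1 - ε)` at
`p = ε` to `log₂ (1/ε)` at `p = 1`, so a solution exists by the intermediate value theorem, and it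
is unique by (i).
-/

lemma mul_log_div_eq (x : ℝ) {y : ℝ} (hy : y ≠ 0) : x * log (x / y) = x * log x - x * log y := by
  rcases eq_or_ne x 0 with rfl | hx
  · simp
  · rw [log_div hx hy, mul_sub]

lemma StrictMonoOn.strictMonoOn_of_rightInvOn {α β : Type*} [LinearOrder α] [Preorder β]
    {f : α → β} {g : β → α} {s : Set α} {t : Set β} (hf : StrictMonoOn f s) (hg : MapsTo g t s)
    (hfg : RightInvOn g f t) : StrictMonoOn g t := fun x hx y hy hxy =>
  (hf.lt_iff_lt (hg hx) (hg hy)).1 (by rwa [hfg hx, hfg hy])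

lemma tendsto_nhdsGT_zero_of_rightInvOn {f ρ : ℝ → ℝ} {a b L : ℝ} (hab : a < b) (hL : 0 < L)
    (hf : StrictMonoOn f (Icc a b)) (hfa : f a = 0) (hρ : MapsTo ρ (Ioo 0 L) (Ioc a b))
    (hfρ : RightInvOn ρ f (Ioo 0 L)) : Tendsto ρ (𝓝[>] 0) (𝓝 a) := by
  have hdom : Ioo 0 L ∈ 𝓝[>] (0 : ℝ) := Ioo_mem_nhdsGT hL
  refine tendsto_order.2 ⟨fun a' ha' => ?_, fun b' hb' => ?_⟩
  · filter_upwards [hdom] with E hE using ha'.trans (hρ hE).1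
  · have hc : min b' b ∈ Icc a b := ⟨le_min hb'.le hab.le, min_le_right _ _⟩
    have hfc : 0 < f (min b' b) := hfa ▸ hf (left_mem_Icc.2 hab.le) hc (lt_min hb' hab)
    filter_upwards [hdom, Ioo_mem_nhdsGT hfc] with E hE hEc
    have : ρ E < min b' b :=
      (hf.lt_iff_lt (Ioc_subset_Icc_self (hρ hE)) hc).1 (by rw [hfρ hE]; exact hEc.2)
    exact this.trans_le (min_le_left _ _)

/-- `binaryKL q p` is the binary Kullback–Leibler divergence `D(p‖q)` in bits. -/
noncomputable def binaryKL (q p : ℝ) : ℝ :=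
  p * logb 2 (p / q) + (1 - p) * logb 2 ((1 - p) / (1 - q))

lemma binaryKL_eq {q : ℝ} (hq₀ : q ≠ 0) (hq₁ : q ≠ 1) (p : ℝ) :
    binaryKL q p = (-binEntropy p - p * log q - (1 - p) * log (1 - q)) / log 2 := by
  simp only [binaryKL, binEntropy, logb, log_inv, ← mul_div_assoc, mul_log_div_eq _ hq₀,
    mul_log_div_eq _ (sub_ne_zero.2 hq₁.symm)]
  ring

lemma binaryKL_self {q : ℝ} (hq₀ : q ≠ 0) (hq₁ : q ≠ 1) : binaryKL q q = 0 := by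
  simp [binaryKL, div_self hq₀, div_self (sub_ne_zero.2 hq₁.symm)]

lemma binaryKL_one (q : ℝ) : binaryKL q 1 = -logb 2 q := by
  simp [binaryKL, logb_inv]

lemma continuous_binaryKL {q : ℝ} (hq₀ : q ≠ 0) (hq₁ : q ≠ 1) : Continuous (binaryKL q) := by
  simp only [funext (binaryKL_eq hq₀ hq₁)]
  fun_prop

lemma hasDerivAt_binaryKL {q p : ℝ} (hq₀ : q ≠ 0) (hq₁ : q ≠ 1) (hp₀ : p ≠ 0) (hp₁ : p ≠ 1) :
    HasDerivAt (binaryKL q) ((log p - log (1 - p) - log q + log (1 - q)) / log 2) p := by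
  rw [funext (binaryKL_eq hq₀ hq₁)]
  have := ((((hasDerivAt_binEntropy hp₀ hp₁).neg.sub ((hasDerivAt_id p).mul_const (log q))).sub
    (((hasDerivAt_id p).const_sub 1).mul_const (log (1 - q)))).div_const (log 2))
  exact this.congr_deriv (by ring)

lemma binaryKL_strictMonoOn {q : ℝ} (hq₀ : 0 < q) (hq₁ : q < 1) :
    StrictMonoOn (binaryKL q) (Icc q 1) := by
  refine strictMonoOn_of_deriv_pos (convex_Icc q 1)
    (continuous_binaryKL hq₀.ne' hq₁.ne).continuousOn fun p hp => ?_
  rw [interior_Icc] at hp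
  have hp₀ : 0 < p := hq₀.trans hp.1
  have hp₁ : 0 < 1 - p := sub_pos.2 hp.2
  rw [(hasDerivAt_binaryKL hq₀.ne' hq₁.ne hp₀.ne' (sub_pos.1 hp₁).ne).deriv]
  have hlog : log q < log p := log_lt_log hq₀ hp.1
  have hlog' : log (1 - p) < log (1 - q) := log_lt_log hp₁ (by linarith [hp.1])
  exact div_pos (by linarith) (log_pos one_lt_two)

lemma exists_binaryKL_eq_mul_one_sub {q L : ℝ} (hq₀ : 0 < q) (hq₁ : q < 1) (hL : 0 < L) :
    ∃ p ∈ Ioo q 1, binaryKL q p = L * (1 - p) := by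
  have hcont : ContinuousOn (fun p => binaryKL q p - L * (1 - p)) (Icc q 1) :=
    ((continuous_binaryKL hq₀.ne' hq₁.ne).sub (by fun_prop)).continuousOn
  have hsign : (0 : ℝ) ∈ Ioo (binaryKL q q - L * (1 - q)) (binaryKL q 1 - L * (1 - 1)) := by
    rw [binaryKL_self hq₀.ne' hq₁.ne, binaryKL_one]
    exact ⟨by nlinarith, by simpa using logb_neg one_lt_two hq₀ hq₁⟩
  obtain ⟨p, hp, hp0⟩ := intermediate_value_Ioo hq₁.le hcont hsign
  exact ⟨p, hp, sub_eq_zero.1 hp0⟩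

section Ratio

variable {ε L : ℝ} {ρ : ℝ → ℝ}

lemma strictAntiOn_one_sub_div_div (hL : 0 < L) (hρ₀ : ∀ E ∈ Ioo 0 L, 0 < ρ E)
    (hρ : StrictMonoOn ρ (Ioo 0 L)) : StrictAntiOn (fun E => (1 - E / L) / ρ E) (Ioo 0 L) :=
  fun E₁ h₁ E₂ h₂ h₁₂ => by
    have hE₁ : E₁ / L < 1 := (div_lt_one hL).2 h₁.2
    have hlt : E₁ / L < E₂ / L := div_lt_div_of_pos_right h₁₂ hL
    exact div_lt_div₀ (by linarith) (hρ h₁ h₂ h₁₂).le (by linarith) (hρ₀ E₁ h₁)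

lemma tendsto_one_sub_div_div_nhdsGT (hε : ε ≠ 0) (hρ : Tendsto ρ (𝓝[>] 0) (𝓝 ε)) :
    Tendsto (fun E => (1 - E / L) / ρ E) (𝓝[>] 0) (𝓝 (1 / ε)) := by
  have hnum : Tendsto (fun E : ℝ => 1 - E / L) (𝓝 0) (𝓝 1) := by
    simpa using (by fun_prop : Continuous fun E : ℝ => 1 - E / L).tendsto 0
  exact (hnum.mono_left nhdsWithin_le_nhds).div hρ hε

lemma tendsto_one_sub_div_div_nhdsLT (hL : 0 < L) (hε : 0 < ε) (hρ : ∀ E ∈ Ioo 0 L, ε ≤ ρ E) :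
    Tendsto (fun E => (1 - E / L) / ρ E) (𝓝[<] L) (𝓝 0) := by
  have hbound : Tendsto (fun E : ℝ => (1 - E / L) / ε) (𝓝 L) (𝓝 0) := by
    simpa [hL.ne'] using (by fun_prop : Continuous fun E : ℝ => (1 - E / L) / ε).tendsto L
  have hnum : ∀ E ∈ Ioo 0 L, 0 ≤ 1 - E / L := fun E hE =>
    sub_nonneg.2 ((div_le_one hL).2 hE.2.le)
  refine tendsto_of_tendsto_of_tendsto_of_le_of_le' tendsto_const_nhds
    (hbound.mono_left nhdsWithin_le_nhds) ?_ ?_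
  · filter_upwards [Ioo_mem_nhdsLT hL] with E hE
    exact div_nonneg (hnum E hE) (hε.le.trans (hρ E hE))
  · filter_upwards [Ioo_mem_nhdsLT hL] with E hE
    exact div_le_div_of_nonneg_left (hnum E hE) hε (hρ E hE)

end Ratio

/-- Maximum error exponent gap.  With `L = |log₂(1-ε)|`,
`ρ_unc(E) = 1 - E/L`, and `ρ_code(E)` the unique `ρ ∈ (ε,1]` with
`D(ρ‖ε) = E`, the ratio `h = ρ_unc/ρ_code`:
(i) is strictly decreasing on `(0,L)`; (ii) tends to `1/ε` as `E → 0⁺`;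
(iii) tends to `0` as `E → L⁻`; (iv) crosses `1` at a unique `E* ∈ (0,L)`. -/
theorem max_error_exponent_gap (ε : ℝ) (hε : 0 < ε) (hε2 : ε ≤ 1 / 2)
    (D : ℝ → ℝ)
    (hD : ∀ p, D p = p * Real.logb 2 (p / ε) + (1 - p) * Real.logb 2 ((1 - p) / (1 - ε)))
    (L : ℝ) (hL : L = |Real.logb 2 (1 - ε)|)
    (ρcode : ℝ → ℝ)
    (hρcode : ∀ E ∈ Set.Ioo (0:ℝ) L, ρcode E ∈ Set.Ioc ε 1 ∧ D (ρcode E) = E)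
    (ρunc : ℝ → ℝ) (hρunc : ∀ E, ρunc E = 1 - E / L)
    (h : ℝ → ℝ) (hh : ∀ E, h E = ρunc E / ρcode E) :
    StrictAntiOn h (Set.Ioo 0 L)
    ∧ Tendsto h (nhdsWithin 0 (Set.Ioi 0)) (nhds (1 / ε))
    ∧ Tendsto h (nhdsWithin L (Set.Iio L)) (nhds 0)
    ∧ ∃! Estar : ℝ, Estar ∈ Set.Ioo (0:ℝ) L ∧ h Estar = 1 := by
  have hε1 : ε < 1 := by linarith
  have hL0 : 0 < L := hL ▸ abs_pos.2 (logb_neg one_lt_two (by linarith) (by linarith)).ne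
  obtain rfl : D = binaryKL ε := funext hD
  obtain rfl : h = fun E => (1 - E / L) / ρcode E := funext fun E => by rw [hh, hρunc]
  have hmaps : MapsTo ρcode (Ioo 0 L) (Ioc ε 1) := fun E hE => (hρcode E hE).1
  have hinv : RightInvOn ρcode (binaryKL ε) (Ioo 0 L) := fun E hE => (hρcode E hE).2
  have hmono := binaryKL_strictMonoOn hε hε1
  have hanti := strictAntiOn_one_sub_div_div hL0 (fun E hE => hε.trans (hmaps hE).1)
    (hmono.strictMonoOn_of_rightInvOn (hmaps.mono_right Ioc_subset_Icc_self) hinv)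
  refine ⟨hanti, tendsto_one_sub_div_div_nhdsGT hε.ne' (tendsto_nhdsGT_zero_of_rightInvOn hε1
    hL0 hmono (binaryKL_self hε.ne' hε1.ne) hmaps hinv),
    tendsto_one_sub_div_div_nhdsLT hL0 hε fun E hE => (hmaps hE).1.le, ?_⟩
  obtain ⟨p, hp, hDp⟩ := exists_binaryKL_eq_mul_one_sub hε hε1 hL0
  have hE : L * (1 - p) ∈ Ioo 0 L := ⟨by nlinarith [hp.2], by nlinarith [hp.1]⟩
  have hρp : ρcode (L * (1 - p)) = p :=
    hmono.injOn (Ioc_subset_Icc_self (hmaps hE)) ⟨hp.1.le, hp.2.le⟩ ((hinv hE).trans hDp.symm)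
  refine ⟨L * (1 - p), ⟨hE, ?_⟩, fun E hE' => hanti.injOn hE'.1 hE (hE'.2.trans ?_)⟩ <;>
  simp only [hρp, mul_div_cancel_left₀ _ hL0.ne', sub_sub_cancel, div_self (hε.trans hp.1).ne']
end
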